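/- arXiv:2108.01989 — 6 statements merged into one kernel-verified Lean document; each statement's English description precedes it below -/
import Mathlib

section
/- Let M be a communication model on n processes, and let (I,O,Δ) and (I,O',Δ') be two tasks with the same input complex. Suppose: (1) for every t ≥ 1, if there exists a name-preserving simplicial map δ : P^(t) → O with δ(τ) ∈ Δ(σ) for every closed simplex σ ∈ I and every τ ∈ Ξ^t(σ), then there exists a name-preserving simplicial map α : P^(t−1) → O' with α(τ) ∈ Δ'(σ) for every closed simplex σ ∈ I and every τ ∈ Ξ^(t−1)(σ); and (2) there exists a name-preserving simplicial map β : Ξ(O') → O such that β(τ') ∈ Δ(σ) for every closed simplex σ ∈ I, every τ ∈ Δ'(σ), and every τ' ∈ Ξ(τ). Then, for every t ≥ 1, (I,O,Δ) is solvable in t rounds in M if and only if (I,O',Δ') is solvable in t−1 rounds in M. -/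
open scoped Classical
noncomputable section

namespace Speedup

/-- A simplex on `n` names with values in `X`: a partial assignment of values to names.
The set of pairs `{(i,x) : σ i = some x}` is the simplex. -/
abbrev Simplex (n : ℕ) (X : Type*) := Fin n → Option X

namespace Simplex

variable {n : ℕ} {X : Type*}

/-- `σ'` is a face of `σ`. -/
def le (σ' σ : Simplex n X) : Prop := ∀ i x, σ' i = some x → σ i = some x

/-- The simplex is a nonempty set of vertices. -/
def NonemptyS (σ : Simplex n X) : Prop := ∃ i, σ i ≠ none

/-- `name(σ)`. -/
def names (σ : Simplex n X) : Set (Fin n) := {i | σ i ≠ none}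

theorem le_trans {σ₁ σ₂ σ₃ : Simplex n X} (h₁ : le σ₁ σ₂) (h₂ : le σ₂ σ₃) : le σ₁ σ₃ :=
  fun i x h => h₂ i x (h₁ i x h)

theorem names_mono {σ' σ : Simplex n X} (h : le σ' σ) : names σ' ⊆ names σ := by
  intro i hi
  rcases Option.ne_none_iff_exists'.1 hi with ⟨x, hx⟩
  exact Option.ne_none_iff_exists'.2 ⟨x, h i x hx⟩

end Simplex

/-- A chromatic simplicial complex on names `[n]` with values in `X`. -/
structure Complex (n : ℕ) (X : Type*) where
  simplices : Set (Simplex n X)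
  nonempty_mem : ∀ σ ∈ simplices, Simplex.NonemptyS σ
  down : ∀ σ ∈ simplices, ∀ σ' : Simplex n X,
    Simplex.le σ' σ → Simplex.NonemptyS σ' → σ' ∈ simplices

variable {n : ℕ}

/-- The closure `Cl(S)`: the smallest chromatic complex containing every simplex in `S`. -/
def cl {X : Type*} (S : Set (Simplex n X)) : Complex n X where
  simplices := {σ' | Simplex.NonemptyS σ' ∧ ∃ σ ∈ S, Simplex.le σ' σ}
  nonempty_mem := fun _ h => h.1
  down := by
    rintro σ ⟨_, τ, hτ, hστ⟩ σ' hle hne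
    exact ⟨hne, τ, hτ, Simplex.le_trans hle hστ⟩

namespace Complex

/-- `(i,x)` is a vertex of `K`. -/
def isVertex {X : Type*} (K : Complex n X) (i : Fin n) (x : X) : Prop :=
  ∃ σ ∈ K.simplices, σ i = some x

/-- `val(K)`: the set of values of vertices of `K`. -/
def vals {X : Type*} (K : Complex n X) : Set X := {x | ∃ i, K.isVertex i x}

/-- `K` is pure of dimension `n-1`: every simplex is a face of a facet on all names. -/
def IsPure {X : Type*} (K : Complex n X) : Prop :=
  ∀ σ ∈ K.simplices, ∃ τ ∈ K.simplices, Simplex.le σ τ ∧ ∀ i, τ i ≠ none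

/-- The skeleton `Sk_I(K)`. -/
def sk {X : Type*} (K : Complex n X) (I : Set (Fin n)) : Complex n X where
  simplices := {σ | σ ∈ K.simplices ∧ Simplex.names σ ⊆ I}
  nonempty_mem := fun σ h => K.nonempty_mem σ h.1
  down := fun σ h σ' hle hne =>
    ⟨K.down σ h.1 σ' hle hne, (Simplex.names_mono hle).trans h.2⟩

end Complex

/-- Projection `π_J(σ)` of a simplex onto a set `J` of names. -/
def proj {X : Type*} (J : Set (Fin n)) (σ : Simplex n X) : Simplex n X :=
  fun i => if i ∈ J then σ i else none

/-- Two simplices (in possibly different complexes) have the same name set. -/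
def sameNames {X Y : Type*} (σ : Simplex n X) (τ : Simplex n Y) : Prop :=
  ∀ i, (σ i).isSome ↔ (τ i).isSome

/-- Image of a simplex under a name-preserving vertex map. -/
def mapSimplex {X Y : Type*} (δ : Fin n → X → Y) (σ : Simplex n X) : Simplex n Y :=
  fun i => (σ i).map (δ i)

/-- The simplex `{(i,(x_i,y_i))}` obtained from `{(i,x_i)}` and `{(i,y_i)}`. -/
def combine {X Y : Type*} (σ : Simplex n X) (τ : Simplex n Y) : Simplex n (X × Y) :=
  fun i => (σ i).bind fun x => (τ i).map fun y => (x, y)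

/-- A task `(I,O,Δ)` (as raw data). -/
structure Task (n : ℕ) (X : Type*) (Y : Type*) where
  inp : Complex n X
  out : Complex n Y
  rel : Simplex n X → Set (Simplex n Y)

/-- Well-formedness of a task: `I` and `O` are pure `(n-1)`-dimensional complexes, and
`Δ` maps each input simplex to a nonempty set of output simplices on the same names. -/
def Task.WF {X Y : Type*} (T : Task n X Y) : Prop :=
  T.inp.IsPure ∧ T.out.IsPure ∧
    ∀ σ ∈ T.inp.simplices,
      (T.rel σ).Nonempty ∧ ∀ τ ∈ T.rel σ, τ ∈ T.out.simplices ∧ sameNames σ τ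

/-! ## Communication models -/

/-- A set of channels. -/
abbrev Chans (n : ℕ) := Set (Set (Fin n))

/-- A communication model: a pure `(n-1)`-dimensional complex whose vertices `(i,E)`
satisfy `{i} ∈ E` and `i ∈ e` for every channel `e ∈ E`. -/
def IsModel (M : Complex n (Chans n)) : Prop :=
  M.IsPure ∧ ∀ i E, M.isVertex i E → ({i} : Set (Fin n)) ∈ E ∧ ∀ e ∈ E, i ∈ e

/-- A closed simplex of the model: the union of all channels equals the name set. -/
def ModelClosed (M : Complex n (Chans n)) (φ : Simplex n (Chans n)) : Prop :=
  φ ∈ M.simplices ∧ ∀ i E, φ i = some E → ∀ e ∈ E, ∀ j ∈ e, φ j ≠ none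

/-- A simplex (of any chromatic complex) is closed w.r.t. `M`. -/
def SimplexClosed {X : Type*} (M : Complex n (Chans n)) (σ : Simplex n X) : Prop :=
  ∃ φ, ModelClosed M φ ∧ sameNames φ σ

/-! ## One round of communication -/

/-- The view of a process after one round: its set of channels together with, for each
channel `e` of that set, the tuple of values of the processes in `e`. -/
abbrev View (n : ℕ) (X : Type*) := Chans n × (Set (Fin n) → Simplex n X)

/-- `Ξ(σ,φ)`. -/
def xiSimplex {X : Type*} (σ : Simplex n X) (φ : Simplex n (Chans n)) :
    Simplex n (View n X) :=
  fun i => (φ i).map fun E => (E, fun e j => if e ∈ E ∧ j ∈ e then σ j else none)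

/-- `Ξ(σ)`: all outcomes of one round of communication from the global state `σ`. -/
def xiSet {X : Type*} (M : Complex n (Chans n)) (σ : Simplex n X) :
    Set (Simplex n (View n X)) :=
  {τ | ∃ φ, ModelClosed M φ ∧ sameNames φ σ ∧ τ = xiSimplex σ φ}

/-- `Ξ(K) = ⋃_{σ ∈ K closed} Cl(Ξ(σ))`. -/
def xiComplex {X : Type*} (M : Complex n (Chans n)) (K : Complex n X) :
    Complex n (View n X) :=
  cl (⋃ σ ∈ {σ | σ ∈ K.simplices ∧ SimplexClosed M σ}, xiSet M σ)

/-- The type of views after `t` rounds. -/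
def ViewTy (n : ℕ) (X : Type*) : ℕ → Type _
  | 0 => X
  | t + 1 => View n (ViewTy n X t)

/-- The protocol complex `P^(t)`. -/
def protocol {X : Type*} (M : Complex n (Chans n)) (K : Complex n X) :
    (t : ℕ) → Complex n (ViewTy n X t)
  | 0 => K
  | t + 1 => xiComplex M (protocol M K t)

/-- `Ξ^t(σ)`: the states reachable from `σ` by `t` successive rounds of communication. -/
def execSet {X : Type*} (M : Complex n (Chans n)) :
    (t : ℕ) → Simplex n X → Set (Simplex n (ViewTy n X t))
  | 0, σ => {σ}
  | t + 1, σ =>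
      {τ | ∃ σ' ∈ execSet M t σ, ∃ φ, ModelClosed M φ ∧ sameNames φ σ' ∧ τ = xiSimplex σ' φ}

/-- `δ` is a name-preserving simplicial map `P^(t) → O` agreeing with `Δ`. -/
def Solves {X Y : Type*} (M : Complex n (Chans n)) (T : Task n X Y) (t : ℕ)
    (δ : Fin n → ViewTy n X t → Y) : Prop :=
  (∀ σ ∈ (protocol M T.inp t).simplices, mapSimplex δ σ ∈ T.out.simplices) ∧
  (∀ σ ∈ T.inp.simplices, SimplexClosed M σ → ∀ τ ∈ execSet M t σ, mapSimplex δ τ ∈ T.rel σ)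

/-- The task `T` is solvable in `t` rounds in the model `M`. -/
def Solvable {X Y : Type*} (M : Complex n (Chans n)) (T : Task n X Y) (t : ℕ) : Prop :=
  ∃ δ : Fin n → ViewTy n X t → Y, Solves M T t δ

/-! ## Local independence -/

/-- The `t`-independence property of (a task with input complex) `K` w.r.t. `M`. -/
def TIndep {X : Type*} (M : Complex n (Chans n)) (K : Complex n X) (t : ℕ) : Prop :=
  ∀ φ, ModelClosed M φ →
    ∀ i Ei, φ i = some Ei → ∀ e ∈ Ei,
      ∀ ρ ∈ (protocol M K t).simplices, Simplex.names ρ = e →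
        ∀ σ : Fin n → Set (Fin n) → Simplex n (ViewTy n X t),
          (∀ j ∈ e, ∀ Ej, φ j = some Ej → ∀ f ∈ Ej, f ≠ e →
            σ j f ∈ (protocol M K t).simplices ∧ Simplex.names (σ j f) = f ∧ σ j f j = ρ j) →
          ∃ υ ∈ (protocol M K t).simplices,
            ∀ k w, υ k = some w ↔
              (ρ k = some w ∨
                ∃ j ∈ e, ∃ Ej, φ j = some Ej ∧ ∃ f ∈ Ej, f ≠ e ∧ σ j f k = some w)

/-! ## Local and edge checkability -/

/-- The task is locally checkable in `M`. -/
def LocallyCheckable {X Y : Type*} (M : Complex n (Chans n)) (T : Task n X Y) : Prop :=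
  ∀ σ ∈ T.inp.simplices, ∀ τ : Simplex n Y,
    sameNames σ τ → (∀ k y, τ k = some y → y ∈ T.out.vals) →
      ∀ φ, ModelClosed M φ → sameNames φ σ →
        (τ ∈ T.rel σ ↔ ∀ i Ei, φ i = some Ei → proj (⋃₀ Ei) τ ∈ T.rel (proj (⋃₀ Ei) σ))

/-- The task is edge-checkable in `M`. -/
def EdgeCheckable {X Y : Type*} (M : Complex n (Chans n)) (T : Task n X Y) : Prop :=
  ∀ σ ∈ T.inp.simplices, ∀ τ : Simplex n Y,
    sameNames σ τ → (∀ k y, τ k = some y → y ∈ T.out.vals) →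
      ∀ φ, ModelClosed M φ → sameNames φ σ →
        (τ ∈ T.rel σ ↔ ∀ i Ei, φ i = some Ei → ∀ e ∈ Ei, proj e τ ∈ T.rel (proj e σ))

/-! ## The derived (speedup) task `Φ*` -/

/-- A value of the output complex `O'` of the derived task: a pair `(x,S)` where `x` is an
input value and `S` is the family `(S_{i,e,E})` of sets of sets of output values for name `i`
(a set of output values encodes a set of vertices of `Sk_{{i}}(O)`). -/
abbrev DerivedVal (n : ℕ) (X Y : Type*) :=
  X × (Set (Fin n) → Chans n → Set (Set Y))

/-- Vertex condition for `(i,(x,S))` in `O'`, including property P0. -/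
def PhiVertex {X Y : Type*} (M : Complex n (Chans n)) (T : Task n X Y) (i : Fin n)
    (p : DerivedVal n X Y) : Prop :=
  p.1 ∈ T.inp.vals ∧
  (∀ e E, i ∈ e → M.isVertex i E → ∀ S ∈ p.2 e E, ∀ y ∈ S, T.out.isVertex i y) ∧
  (∀ E, M.isVertex i E →
    ∀ c : Set (Fin n) → Set Y, (∀ e ∈ E, c e ∈ p.2 e E) → ∃ y, ∀ e ∈ E, y ∈ c e)

/-- Facet condition for `{(i,(x_i,S_i)) : i ∈ [n]}` in `O'`: properties P1 and P2.
In P1, the choice depends only on the channel `e` and on the vertices `(k,E_k)` for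
`k ∈ e` (encoded by `proj e φ`), and not on the rest of `φ`. -/
def PhiFacet {X Y : Type*} (M : Complex n (Chans n)) (T : Task n X Y)
    (v : Fin n → DerivedVal n X Y) : Prop :=
  (∀ i, PhiVertex M T i (v i)) ∧
  -- P1
  (∃ choice : Set (Fin n) → Simplex n (Chans n) → Fin n → Set Y,
    ∀ φ, ModelClosed M φ → ∀ i Ei, φ i = some Ei → ∀ e ∈ Ei,
      (∀ k ∈ e, ∀ Ek, φ k = some Ek → choice e (proj e φ) k ∈ (v k).2 e Ek) ∧
      (∀ y : Fin n → Y, (∀ k ∈ e, y k ∈ choice e (proj e φ) k) →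
        ∃ τ ∈ T.inp.simplices, (∀ k ∈ e, τ k = some (v k).1) ∧
          ∃ ρ ∈ T.rel τ, ∀ k ∈ e, ρ k = some (y k))) ∧
  -- P2
  (∀ φ, ModelClosed M φ →
    (∀ i Ei, φ i = some Ei → ∃ S, (v i).2 {i} Ei = {S}) ∧
    (∀ i Ei j Ej, φ i = some Ei → φ j = some Ej → ∀ e ∈ Ej, i ∈ e →
      (∀ f ∈ Ei, j ∉ f) → (v i).2 e Ei = (v i).2 {i} Ei))

/-- The output complex `O'` of the derived task: the closure of the set of its facets. -/
def phiOut {X Y : Type*} (M : Complex n (Chans n)) (T : Task n X Y) :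
    Complex n (DerivedVal n X Y) :=
  cl {σ | ∃ v : Fin n → DerivedVal n X Y, PhiFacet M T v ∧ σ = fun i => some (v i)}

/-- The input-output specification `Δ'` of the derived task (property P3). -/
def phiRel {X Y : Type*} (M : Complex n (Chans n)) (T : Task n X Y) (σ : Simplex n X) :
    Set (Simplex n (DerivedVal n X Y)) :=
  {τ | τ ∈ (phiOut M T).simplices ∧ ∀ i, (τ i).map Prod.fst = σ i}

/-- The derived task `Φ*(I,O,Δ) = (I,O',Δ')` given by properties P0–P3. -/
def phiTask {X Y : Type*} (M : Complex n (Chans n)) (T : Task n X Y) :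
    Task n X (DerivedVal n X Y) :=
  ⟨T.inp, phiOut M T, phiRel M T⟩

/-! ## Specific models -/

/-- `H-LOCAL(H)` for a hypergraph `H` on `[n]`: the model with the unique facet
`{(i, E_H(i)) : i ∈ [n]}` where `E_H(i) = {e ∈ H : i ∈ e} ∪ {{i}}`. -/
def hlocal (H : Set (Set (Fin n))) : Complex n (Chans n) :=
  cl {fun i => some {e | (e ∈ H ∧ i ∈ e) ∨ e = {i}}}

/-- `LOCAL(G)` for a graph given by its adjacency relation. -/
def localModel (adj : Fin n → Fin n → Prop) : Complex n (Chans n) :=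
  cl {fun i => some {e | e = {i} ∨ ∃ j, adj i j ∧ e = ({i, j} : Set (Fin n))}}

/-- `WF-LOCAL(G)`: the asynchronous wait-free variant of `LOCAL(G)`. -/
def wfLocal (adj : Fin n → Fin n → Prop) : Complex n (Chans n) :=
  cl {σ | ∃ (I : Set (Fin n)) (E : Fin n → Set (Fin n)),
      I.Nonempty ∧
      (∀ i ∈ I, i ∈ E i ∧ E i ⊆ insert i {j | adj i j}) ∧
      (∀ U, U ⊆ I → (∀ i ∈ U, ∀ j ∈ U, i ≠ j → adj i j) →
        ∀ i ∈ U, ∀ j ∈ U,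
          (E i ∩ U ⊆ E j ∩ U ∨ E j ∩ U ⊆ E i ∩ U) ∧ (j ∈ E i → E j ∩ U ⊆ E i)) ∧
      σ = fun i => if i ∈ I then
          some {e | e = {i} ∨ ∃ j ∈ E i, j ≠ i ∧ e = ({i, j} : Set (Fin n))} else none}


/-- Lift a vertex map to views. -/
def viewMap {X Y : Type*} (δ : Fin n → X → Y) (_i : Fin n) (v : View n X) : View n Y :=
  (v.1, fun e j => (v.2 e j).map (δ j))

theorem mapSimplex_le {X Y : Type*} {δ : Fin n → X → Y} {σ' σ : Simplex n X}
    (h : Simplex.le σ' σ) : Simplex.le (mapSimplex δ σ') (mapSimplex δ σ) := by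
  intro i y hy
  rcases Option.map_eq_some_iff.1 hy with ⟨x, hx, rfl⟩
  exact Option.map_eq_some_iff.2 ⟨x, h i x hx, rfl⟩

theorem mapSimplex_nonempty {X Y : Type*} {δ : Fin n → X → Y} {σ : Simplex n X}
    (h : Simplex.NonemptyS σ) : Simplex.NonemptyS (mapSimplex δ σ) := by
  rcases h with ⟨i, hi⟩
  exact ⟨i, by simp [mapSimplex, Option.map_eq_none_iff, hi]⟩

theorem sameNames_mapSimplex {X Y Z : Type*} {δ : Fin n → X → Y} {φ : Simplex n Z}
    {σ : Simplex n X} (h : sameNames φ σ) : sameNames φ (mapSimplex δ σ) := by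
  intro i
  simp [mapSimplex, Option.isSome_map, h i]

theorem xiSimplex_map {X Y : Type*} (δ : Fin n → X → Y) (σ : Simplex n X)
    (φ : Simplex n (Chans n)) :
    xiSimplex (mapSimplex δ σ) φ = mapSimplex (viewMap δ) (xiSimplex σ φ) := by
  funext i
  simp only [xiSimplex, mapSimplex, Option.map_map]
  cases φ i with
  | none => rfl
  | some E =>
    simp only [Option.map_some, Function.comp, viewMap]
    refine congrArg some (Prod.ext rfl ?_)
    funext e j
    by_cases h : e ∈ E ∧ j ∈ e <;> simp [h, mapSimplex]

theorem mapSimplex_comp {X Y Z : Type*} (β : Fin n → Y → Z) (g : Fin n → X → Y)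
    (σ : Simplex n X) :
    mapSimplex (fun i v => β i (g i v)) σ = mapSimplex β (mapSimplex g σ) := by
  funext i
  simp [mapSimplex, Option.map_map, Function.comp_def]

/-- If `(I,O',Δ')` satisfies the two speedup conditions with respect to
`(I,O,Δ)` in the model `M`, then for every `t ≥ 1`, `(I,O,Δ)` is solvable in `t` rounds
in `M` if and only if `(I,O',Δ')` is solvable in `t-1` rounds in `M`. -/
theorem speedup_iff {n : ℕ} {X Y Y' : Type*} (M : Complex n (Chans n)) (hM : IsModel M)
    (T : Task n X Y) (T' : Task n X Y') (hT : T.WF) (hT' : T'.WF) (hI : T'.inp = T.inp)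
    -- (1): solvability of `T` in `t` rounds yields solvability of `T'` in `t-1` rounds
    (h1 : ∀ t : ℕ, 1 ≤ t → Solvable M T t → Solvable M T' (t - 1))
    -- (2): a name-preserving simplicial map `β : Ξ(O') → O` with
    -- `β(τ') ∈ Δ(σ)` for closed `σ ∈ I`, `τ ∈ Δ'(σ)`, and `τ' ∈ Ξ(τ)`
    (h2 : ∃ β : Fin n → View n Y' → Y,
      (∀ ρ ∈ (xiComplex M T'.out).simplices, mapSimplex β ρ ∈ T.out.simplices) ∧
      (∀ σ ∈ T.inp.simplices, SimplexClosed M σ →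
        ∀ τ ∈ T'.rel σ, ∀ τ' ∈ xiSet M τ, mapSimplex β τ' ∈ T.rel σ)) :
    ∀ t : ℕ, 1 ≤ t → (Solvable M T t ↔ Solvable M T' (t - 1)) := by
  intro t ht
  constructor
  · exact h1 t ht
  · obtain ⟨s, rfl⟩ : ∃ s, t = s + 1 := ⟨t - 1, (Nat.succ_pred_eq_of_pos ht).symm⟩
    rintro ⟨δ', hδ'₁, hδ'₂⟩
    obtain ⟨β, hβ₁, hβ₂⟩ := h2
    refine ⟨fun i v => β i (viewMap δ' i v), ?_, ?_⟩
    · -- simplicial map on the protocol complex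
      intro σ hσ
      refine Eq.mpr (congrArg (· ∈ T.out.simplices) (show mapSimplex (fun i v => β i (viewMap δ' i v)) σ = mapSimplex β (mapSimplex (viewMap δ') σ) from mapSimplex_comp _ _ _)) ?_
      apply hβ₁
      rcases hσ with ⟨hne, σ₁, hσ₁, hle⟩
      rcases Set.mem_iUnion₂.1 hσ₁ with ⟨σ₀, hσ₀, hx⟩
      rcases hx with ⟨φ, hφc, hφn, rfl⟩
      rcases hσ₀ with ⟨hσ₀mem, -⟩
      refine ⟨mapSimplex_nonempty hne, xiSimplex (mapSimplex δ' σ₀) φ, ?_, ?_⟩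
      · refine Set.mem_iUnion₂.2 ⟨mapSimplex δ' σ₀, ⟨?_, φ, hφc, sameNames_mapSimplex hφn⟩,
          φ, hφc, sameNames_mapSimplex hφn, rfl⟩
        have := hδ'₁ σ₀ (by rw [hI]; exact hσ₀mem)
        exact this
      · rw [xiSimplex_map]
        exact mapSimplex_le hle
    · -- agreement with Δ
      intro σ hσ hσc τ hτ
      rcases hτ with ⟨σ', hσ', φ, hφc, hφn, rfl⟩
      refine Eq.mpr (congrArg (· ∈ T.rel σ) (show mapSimplex (fun i v => β i (viewMap δ' i v)) (xiSimplex σ' φ) = mapSimplex β (xiSimplex (mapSimplex δ' σ') φ) from by rw [xiSimplex_map]; exact mapSimplex_comp _ _ _)) ?_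
      have hrel : mapSimplex δ' σ' ∈ T'.rel σ := hδ'₂ σ (by rw [hI]; exact hσ) hσc σ' hσ'
      exact hβ₂ σ hσ hσc _ hrel _ ⟨φ, hφc, sameNames_mapSimplex hφn, rfl⟩

end Speedup
end
end

section
/- For n = 2, every task (I,O,Δ) on 2 processes satisfies the t-independence property with respect to every communication model M on 2 processes, for every integer t ≥ 0. -/
open scoped Classical
noncomputable section

namespace Speedup

variable {n : ℕ}

private lemma fin2_k (i k : Fin 2) : k = i ∨ k = 1 - i := by
  revert i k; decide

private lemma fin2_ne (i : Fin 2) : (1 : Fin 2) - i ≠ i := by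
  revert i; decide

private lemma fin2_set_cases (i : Fin 2) (s : Set (Fin 2)) (hi : i ∈ s) :
    s = {i} ∨ s = Set.univ := by
  by_cases h : (1 - i) ∈ s
  · right
    ext k
    rcases fin2_k i k with rfl | rfl <;> simp [hi, h]
  · left
    ext k
    rcases fin2_k i k with rfl | rfl
    · simp [hi]
    · simp [h, fin2_ne i]

private lemma fin2_univ_ne_singleton (i : Fin 2) : (Set.univ : Set (Fin 2)) ≠ {i} := by
  intro h
  have h1 : (1 - i) ∈ ({i} : Set (Fin 2)) := h ▸ Set.mem_univ _
  exact fin2_ne i h1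

/-- For `n = 2`, every task on 2 processes satisfies the
`t`-independence property with respect to every communication model on 2 processes,
for every `t ≥ 0`. -/
theorem two_process_tindep {X Y : Type*} (M : Complex 2 (Chans 2)) (hM : IsModel M)
    (T : Task 2 X Y) (hT : T.WF) (t : ℕ) : TIndep M T.inp t := by
  intro φ hφ i Ei hEi e he ρ hρ hnames σ hσ
  have hvert : ∀ j Ej, φ j = some Ej → ({j} : Set (Fin 2)) ∈ Ej ∧ ∀ f ∈ Ej, j ∈ f :=
    fun j Ej h => hM.2 j Ej ⟨φ, hφ.1, h⟩
  have hie : i ∈ e := (hvert i Ei hEi).2 e he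
  rcases fin2_set_cases i e hie with rfl | rfl
  · -- e = {i}
    by_cases huniv : Set.univ ∈ Ei
    · obtain ⟨h1, h2, h3⟩ :=
        hσ i rfl Ei hEi Set.univ huniv (fin2_univ_ne_singleton i)
      refine ⟨σ i Set.univ, h1, fun k w => ?_⟩
      constructor
      · intro hk
        exact Or.inr ⟨i, rfl, Ei, hEi, Set.univ, huniv, fin2_univ_ne_singleton i, hk⟩
      · rintro (hk | ⟨j, hj, Ej, hEj, f, hf, hfne, hk⟩)
        · have hki : k ∈ Simplex.names ρ := by
            simp [Simplex.names, hk]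
          rw [hnames] at hki
          rcases hki with rfl
          rw [h3]
          exact hk
        · rcases hj with rfl
          have hE : Ej = Ei := by
            rw [hEi] at hEj
            exact (Option.some.inj hEj).symm
          subst hE
          rcases fin2_set_cases j f ((hvert j Ej hEj).2 f hf) with rfl | rfl
          · exact absurd rfl hfne
          · exact hk
    · refine ⟨ρ, hρ, fun k w => ?_⟩
      constructor
      · exact Or.inl
      · rintro (hk | ⟨j, hj, Ej, hEj, f, hf, hfne, hk⟩)
        · exact hk
        · rcases hj with rfl
          have hE : Ej = Ei := by
            rw [hEi] at hEj
            exact (Option.some.inj hEj).symm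
          subst hE
          rcases fin2_set_cases j f ((hvert j Ej hEj).2 f hf) with rfl | rfl
          · exact absurd rfl hfne
          · exact absurd hf huniv
  · -- e = univ
    refine ⟨ρ, hρ, fun k w => ?_⟩
    constructor
    · exact Or.inl
    · rintro (hk | ⟨j, hj, Ej, hEj, f, hf, hfne, hk⟩)
      · exact hk
      · obtain ⟨h1, h2, h3⟩ := hσ j hj Ej hEj f hf hfne
        rcases fin2_set_cases j f ((hvert j Ej hEj).2 f hf) with rfl | rfl
        · have hkj : k ∈ Simplex.names (σ j {j}) := by
            simp [Simplex.names, hk]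
          rw [h2] at hkj
          rcases hkj with rfl
          rw [← h3]
          exact hk
        · exact absurd rfl hfne

end Speedup
end
end

section
/- Let M be a communication model on n processes, let K be a pure (n−1)-dimensional chromatic complex, and let σ be a simplex of K. For a closed simplex φ of M and a subcomplex K' of K, define Ξ(K',φ) = Cl(⋃ {Ξ(σ',φ) : σ' ∈ K' with name(σ') = name(φ)}). Then for every vertex (i,E) of M and any two closed simplices φ and ψ of M that both contain the vertex (i,E), the skeletons coincide: Sk_{{i}}(Ξ(Cl(St(σ)),φ)) = Sk_{{i}}(Ξ(Cl(St(σ)),ψ)). -/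
open scoped Classical
noncomputable section

namespace Speedup

variable {n : ℕ}

/-- The closure `Cl(St(σ))` of the star of a simplex `σ` in `K` (Statement 11). -/
def clStar {n : ℕ} {X : Type*} (K : Complex n X) (σ : Simplex n X) : Complex n X :=
  cl {τ | τ ∈ K.simplices ∧ Simplex.le σ τ}

/-- `Ξ(K',φ) = Cl(⋃ {Ξ(σ',φ) : σ' ∈ K', name(σ') = name(φ)})` for a fixed closed
simplex `φ` of the model (Statement 11). -/
def xiAt {n : ℕ} {X : Type*} (K' : Complex n X) (φ : Simplex n (Chans n)) :
    Complex n (View n X) :=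
  cl {τ | ∃ σ' ∈ K'.simplices, sameNames φ σ' ∧ τ = xiSimplex σ' φ}

theorem sk_xiAt_subset {n : ℕ} {X : Type*} (M : Complex n (Chans n))
    (K : Complex n X) (hK : K.IsPure)
    (σ : Simplex n X) (hσ : σ ∈ K.simplices)
    (i : Fin n) (E : Chans n)
    (φ ψ : Simplex n (Chans n)) (hφ : ModelClosed M φ) (hψ : ModelClosed M ψ)
    (hφi : φ i = some E) (hψi : ψ i = some E) :
    ((xiAt (clStar K σ) φ).sk {i}).simplices ⊆
      ((xiAt (clStar K σ) ψ).sk {i}).simplices := by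
  rintro τ ⟨⟨hne, τ', ⟨σ', hσ', hsn, rfl⟩, hle⟩, hnames⟩
  -- τ is a single vertex at i
  obtain ⟨j, hj⟩ := hne
  have hji : j = i := hnames hj
  subst hji
  obtain ⟨w, hw⟩ := Option.ne_none_iff_exists'.1 hj
  have hτ'i : xiSimplex σ' φ j = some w := hle j w hw
  -- compute w
  have hwval : w = (E, fun e k => if e ∈ E ∧ k ∈ e then σ' k else none) := by
    unfold xiSimplex at hτ'i
    rw [hφi] at hτ'i
    simpa using hτ'i.symm
  -- σ' ∈ clStar K σ
  obtain ⟨hne', that, ⟨hthatK, hσthat⟩, hσ'that⟩ := hσ'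
  -- extend to a facet Sig of K
  obtain ⟨Sig, hSigK, hthatSig, hSigfull⟩ := hK that hthatK
  have hσSig : Simplex.le σ Sig := Simplex.le_trans hσthat hthatSig
  have hσ'Sig : Simplex.le σ' Sig := Simplex.le_trans hσ'that hthatSig
  -- build σ''
  set σ'' : Simplex n X := fun k => if (ψ k).isSome then Sig k else none with hσ''def
  have hσ''mem : σ'' ∈ (clStar K σ).simplices := by
    refine ⟨⟨j, ?_⟩, Sig, ⟨hSigK, hσSig⟩, ?_⟩
    · simp only [hσ''def, hψi, Option.isSome_some, if_true]
      exact hSigfull j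
    · intro k x hx
      simp only [hσ''def] at hx
      split at hx
      · exact hx
      · exact absurd hx (by simp)
  have hsn'' : sameNames ψ σ'' := by
    intro k
    simp only [hσ''def]
    constructor
    · intro h; simp only [h, if_true]
      exact Option.ne_none_iff_isSome.1 (hSigfull k)
    · intro h; by_contra hc
      simp [Option.not_isSome_iff_eq_none.1 (by simpa using hc)] at h
  -- σ'' agrees with σ' on ⋃₀ E
  have hagree : ∀ e ∈ E, ∀ k ∈ e, σ'' k = σ' k := by
    intro e he k hk
    have hψk : ψ k ≠ none := hψ.2 j E hψi e he k hk
    have hφk : φ k ≠ none := hφ.2 j E hφi e he k hk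
    have hσ'k : (σ' k).isSome := (hsn k).1 (Option.ne_none_iff_isSome.1 hφk)
    obtain ⟨x, hx⟩ := Option.isSome_iff_exists.1 hσ'k
    have hSigk : Sig k = some x := hσ'Sig k x hx
    simp only [hσ''def, Option.ne_none_iff_isSome.1 hψk, if_true, hSigk, hx]
  -- xiSimplex σ'' ψ at j equals some w
  have hxi : xiSimplex σ'' ψ j = some w := by
    unfold xiSimplex
    rw [hψi, hwval]
    simp only [Option.map_some]
    congr 2
    funext e k
    by_cases h : e ∈ E ∧ k ∈ e
    · simp only [h, if_true]
      exact hagree e h.1 k h.2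
    · simp [h]
  refine ⟨⟨⟨j, hj⟩, xiSimplex σ'' ψ, ⟨σ'', hσ''mem, hsn'', rfl⟩, ?_⟩, hnames⟩
  intro k x hx
  have hkj : k = j := hnames (Option.ne_none_iff_exists'.2 ⟨x, hx⟩)
  subst hkj
  rw [hw] at hx
  rw [hxi, hx]

/-- For every vertex `(i,E)` of `M` and any two closed simplices `φ`
and `ψ` of `M` both containing the vertex `(i,E)`, the skeletons coincide:
`Sk_{{i}}(Ξ(Cl(St(σ)),φ)) = Sk_{{i}}(Ξ(Cl(St(σ)),ψ))`. -/
theorem sk_xiAt_independent {n : ℕ} {X : Type*} (M : Complex n (Chans n))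
    (hM : IsModel M) (K : Complex n X) (hK : K.IsPure)
    (σ : Simplex n X) (hσ : σ ∈ K.simplices)
    (i : Fin n) (E : Chans n) (hv : M.isVertex i E)
    (φ ψ : Simplex n (Chans n)) (hφ : ModelClosed M φ) (hψ : ModelClosed M ψ)
    (hφi : φ i = some E) (hψi : ψ i = some E) :
    ((xiAt (clStar K σ) φ).sk {i}).simplices =
      ((xiAt (clStar K σ) ψ).sk {i}).simplices := by
  exact Set.Subset.antisymm
    (sk_xiAt_subset M K hK σ hσ i E φ ψ hφ hψ hφi hψi)
    (sk_xiAt_subset M K hK σ hσ i E ψ φ hψ hφ hψi hφi)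

end Speedup
end
end

section
/- Let k ≥ 1, n = 2k, and let G be the graph on vertex set [n] whose edge set is {{1,2i} : i ∈ [k]} ∪ {{2,2i−1} : i ∈ [k]} (two stars centered at nodes 1 and 2 sharing the edge {1,2}). Let I be the pure (n−1)-dimensional chromatic complex whose facets are the sets {(i,x_i) : i ∈ [n]} with x_i ∈ {1,2,3} for every i, x_1 ≠ x_{2i} for every i ∈ [k], and x_2 ≠ x_{2i−1} for every i ∈ [k]. Then every task with input complex I satisfies the 0-independence property with respect to LOCAL(G). -/
open scoped Classical
noncomputable section

namespace Speedup

variable {n : ℕ}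

/-- The double star graph on `[2k]` (Statement 12), written 0-indexed: node `1` of the
paper is index `0`, node `2` is index `1`, node `2i` is index `2i-1` (odd indices), and
node `2i-1` is index `2i-2` (even indices). Node `1` is adjacent to the nodes `2i`
(odd indices), and node `2` is adjacent to the nodes `2i-1` (even indices). -/
def starAdj (n : ℕ) (a b : Fin n) : Prop :=
  (a.val = 0 ∧ b.val % 2 = 1) ∨ (a.val = 1 ∧ b.val % 2 = 0) ∨
  (b.val = 0 ∧ a.val % 2 = 1) ∨ (b.val = 1 ∧ a.val % 2 = 0)

/-- The input complex whose facets are the proper 3-colorings of the double star. -/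
def colorI (n : ℕ) : Complex n (Fin 3) :=
  cl {σ | ∃ v : Fin n → Fin 3, (∀ a b, starAdj n a b → v a ≠ v b) ∧
        σ = fun i => some (v i)}

section StarAux

variable {n : ℕ}

lemma starAdj_par {a b : Fin n} (h : starAdj n a b) : b.val % 2 = 1 - a.val % 2 := by
  rcases h with ⟨ha, hb⟩ | ⟨ha, hb⟩ | ⟨hb, ha⟩ | ⟨hb, ha⟩ <;> omega

lemma starAdj_symm {a b : Fin n} (h : starAdj n a b) : starAdj n b a := by
  unfold starAdj at h ⊢; tauto

lemma starAdj_ne {a b : Fin n} (h : starAdj n a b) : a ≠ b := by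
  have h1 := starAdj_par h
  intro hab; rw [hab] at h1; omega

lemma starAdj_low {a b : Fin n} (h : starAdj n a b) : a.val < 2 ∨ b.val < 2 := by
  rcases h with ⟨ha, _⟩ | ⟨ha, _⟩ | ⟨hb, _⟩ | ⟨hb, _⟩ <;> omega

lemma starAdj_high {a x : Fin n} (ha : 2 ≤ a.val) (h : starAdj n a x) :
    x.val = 1 - a.val % 2 := by
  rcases h with ⟨h1, h2⟩ | ⟨h1, h2⟩ | ⟨h1, h2⟩ | ⟨h1, h2⟩ <;> omega

lemma starAdj_unique {a x y : Fin n} (ha : 2 ≤ a.val) (hx : starAdj n a x)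
    (hy : starAdj n a y) : x = y :=
  Fin.ext (by rw [starAdj_high ha hx, starAdj_high ha hy])

lemma starAdj_two_nbrs {a x y : Fin n} (hx : starAdj n a x) (hy : starAdj n a y)
    (hxy : x ≠ y) : a.val < 2 := by
  by_contra h
  exact hxy (starAdj_unique (by omega) hx hy)

lemma starAdj_no_triangle {i a b : Fin n} (h1 : starAdj n i a) (h2 : starAdj n i b)
    (h3 : starAdj n a b) : False := by
  have p1 := starAdj_par h1; have p2 := starAdj_par h2; have p3 := starAdj_par h3
  omega

/-- The canonical channel set of node `j` in `LOCAL(double star)`. -/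
def starCanon (n : ℕ) (j : Fin n) : Chans n :=
  {e | e = {j} ∨ ∃ m, starAdj n j m ∧ e = ({j, m} : Set (Fin n))}

lemma starCanon_shape {j : Fin n} {f : Set (Fin n)} (hf : f ∈ starCanon n j) :
    f = {j} ∨ ∃ m, starAdj n j m ∧ f = ({j, m} : Set (Fin n)) := hf

lemma starCanon_self {j : Fin n} {f : Set (Fin n)} (hf : f ∈ starCanon n j) : j ∈ f := by
  rcases starCanon_shape hf with h | ⟨m, _, h⟩ <;> subst h
  · exact rfl
  · exact Set.mem_insert _ _

lemma starCanon_pair {j m : Fin n} {f : Set (Fin n)} (hf : f ∈ starCanon n j)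
    (hm : m ∈ f) (hmj : m ≠ j) : f = {j, m} ∧ starAdj n j m := by
  rcases starCanon_shape hf with h | ⟨m', ha, h⟩
  · subst h; exact absurd (Set.mem_singleton_iff.1 hm) hmj
  · subst h
    rcases Set.mem_insert_iff.1 hm with h | h
    · exact absurd h hmj
    · rw [Set.mem_singleton_iff] at h; subst h; exact ⟨rfl, ha⟩

lemma localModel_channels {adj : Fin n → Fin n → Prop} {φ : Simplex n (Chans n)}
    (hφ : φ ∈ (localModel adj).simplices) {j : Fin n} {E : Chans n} (h : φ j = some E) :
    E = {e | e = {j} ∨ ∃ m, adj j m ∧ e = ({j, m} : Set (Fin n))} := by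
  obtain ⟨-, ψ, hψ, hle⟩ := hφ
  have h2 := hle j E h
  rw [Set.mem_singleton_iff] at hψ
  subst hψ
  exact (Option.some_injective _ h2).symm

/-- From local consistency data, a global proper coloring agreeing with it. -/
lemma exists_star_coloring (hn : 2 ≤ n) (Q : Fin n → Fin 3 → Prop)
    (huniq : ∀ m w w', Q m w → Q m w' → w = w')
    (hedge : ∀ a b wa wb, starAdj n a b → Q a wa → Q b wb → wa ≠ wb)
    (hD : ∀ m c, 2 ≤ m.val → starAdj n m c → (∃ w, Q m w) → ∃ w, Q c w) :
    ∃ v : Fin n → Fin 3, (∀ a b, starAdj n a b → v a ≠ v b) ∧ ∀ m w, Q m w → v m = w := by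
  classical
  obtain ⟨z0, hz0v⟩ : ∃ z : Fin n, z.val = 0 := ⟨⟨0, by omega⟩, rfl⟩
  obtain ⟨z1, hz1v⟩ : ∃ z : Fin n, z.val = 1 := ⟨⟨1, by omega⟩, rfl⟩
  have hz01 : z0 ≠ z1 := fun h => by rw [h] at hz0v; omega
  have hadj01 : starAdj n z0 z1 := Or.inl ⟨hz0v, by omega⟩
  have hchoose : ∀ m (h : ∃ w, Q m w) w, Q m w → h.choose = w :=
    fun m h w hw => huniq m h.choose w h.choose_spec hw
  set c0 : Fin 3 := if h : ∃ w, Q z0 w then h.choose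
    else if h1 : ∃ w, Q z1 w then h1.choose + 1 else 0 with hc0def
  set c1 : Fin 3 := if h : ∃ w, Q z1 w then h.choose else c0 + 1 with hc1def
  set v : Fin n → Fin 3 := fun m =>
    if m = z0 then c0 else if m = z1 then c1
    else if h : ∃ w, Q m w then h.choose
    else if m.val % 2 = 1 then c0 + 1 else c1 + 1 with hvdef
  have hc0 : ∀ w, Q z0 w → c0 = w := by
    intro w hw
    rw [hc0def, dif_pos ⟨w, hw⟩]
    exact hchoose z0 ⟨w, hw⟩ w hw
  have hc1 : ∀ w, Q z1 w → c1 = w := by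
    intro w hw
    rw [hc1def, dif_pos ⟨w, hw⟩]
    exact hchoose z1 ⟨w, hw⟩ w hw
  have hfin3 : ∀ x : Fin 3, x + 1 ≠ x := by decide
  have hc01 : c0 ≠ c1 := by
    by_cases h1 : ∃ w, Q z1 w
    · by_cases h0 : ∃ w, Q z0 w
      · obtain ⟨w0, hw0⟩ := h0
        obtain ⟨w1, hw1⟩ := h1
        rw [hc0 w0 hw0, hc1 w1 hw1]
        exact hedge z0 z1 w0 w1 hadj01 hw0 hw1
      · rw [hc0def, dif_neg h0, dif_pos h1, hc1 h1.choose h1.choose_spec]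
        exact hfin3 _
    · rw [hc1def, dif_neg h1]
      exact (hfin3 c0).symm
  have hv0 : v z0 = c0 := by rw [hvdef]; simp
  have hv1 : v z1 = c1 := by rw [hvdef]; simp [Ne.symm hz01]
  have hvQ : ∀ m w, Q m w → v m = w := by
    intro m w hw
    by_cases hm0 : m = z0
    · subst hm0; rw [hv0]; exact hc0 w hw
    by_cases hm1 : m = z1
    · subst hm1; rw [hv1]; exact hc1 w hw
    rw [hvdef]
    simp only [if_neg hm0, if_neg hm1]
    rw [dif_pos ⟨w, hw⟩]
    exact hchoose m ⟨w, hw⟩ w hw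
  have hval2 : ∀ b : Fin n, b ≠ z0 → b ≠ z1 → 2 ≤ b.val := by
    intro b h0 h1
    have e0 : b.val ≠ 0 := fun h => h0 (Fin.ext (h.trans hz0v.symm))
    have e1 : b.val ≠ 1 := fun h => h1 (Fin.ext (h.trans hz1v.symm))
    omega
  have hkey : ∀ a b, starAdj n a b → a.val < 2 → v a ≠ v b := by
    intro a b hab ha2
    have hpar := starAdj_par hab
    have hba : a ≠ b := starAdj_ne hab
    by_cases ha0 : a.val = 0
    · have haz : a = z0 := Fin.ext (ha0.trans hz0v.symm)
      rw [haz] at hab hba hpar ⊢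
      rw [hv0]
      by_cases hb1 : b = z1
      · subst hb1; rw [hv1]; exact hc01
      · have hb0 : b ≠ z0 := Ne.symm hba
        have hb2 : 2 ≤ b.val := hval2 b hb0 hb1
        rw [hvdef]
        simp only [if_neg hb0, if_neg hb1]
        by_cases hAb : ∃ w, Q b w
        · rw [dif_pos hAb]
          obtain ⟨w0, hw0⟩ := hD b z0 hb2 (starAdj_symm hab) hAb
          rw [hc0 w0 hw0]
          exact hedge z0 b w0 hAb.choose hab hw0 hAb.choose_spec
        · rw [dif_neg hAb]
          rw [if_pos (show b.val % 2 = 1 by omega)]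
          exact (hfin3 c0).symm
    · have ha1 : a.val = 1 := by omega
      have haz : a = z1 := Fin.ext (ha1.trans hz1v.symm)
      rw [haz] at hab hba hpar ⊢
      rw [hv1]
      by_cases hb0 : b = z0
      · subst hb0; rw [hv0]; exact hc01.symm
      · have hb1 : b ≠ z1 := Ne.symm hba
        have hb2 : 2 ≤ b.val := hval2 b hb0 hb1
        rw [hvdef]
        simp only [if_neg hb0, if_neg hb1]
        by_cases hAb : ∃ w, Q b w
        · rw [dif_pos hAb]
          obtain ⟨w1, hw1⟩ := hD b z1 hb2 (starAdj_symm hab) hAb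
          rw [hc1 w1 hw1]
          exact hedge z1 b w1 hAb.choose hab hw1 hAb.choose_spec
        · rw [dif_neg hAb]
          rw [if_neg (show ¬ b.val % 2 = 1 by omega)]
          exact (hfin3 c1).symm
  refine ⟨v, ?_, hvQ⟩
  intro a b hab
  rcases starAdj_low hab with h | h
  · exact hkey a b hab h
  · exact (hkey b a (starAdj_symm hab) h).symm

end StarAux

/-- Every task with input complex `I` (the proper 3-colorings of the
double star on `2k` nodes) satisfies the 0-independence property with respect to
`LOCAL(G)`; the property depends only on the model and the input complex. -/
theorem double_star_zero_independence (k : ℕ) (hk : 1 ≤ k) :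
    TIndep (localModel (starAdj (2 * k))) (colorI (2 * k)) 0 := by
  classical
  intro φ hφ i Ei hEi e he ρ hρ0 hρn σ hσ0
  obtain ⟨hφs, hφcl⟩ := hφ
  have hρ : ρ ∈ (colorI (2 * k)).simplices := hρ0
  have hcanon : ∀ j E, φ j = some E → E = starCanon (2 * k) j :=
    fun j E h => localModel_channels hφs h
  have he' : e ∈ starCanon (2 * k) i := by rw [← hcanon i Ei hEi]; exact he
  have hie : i ∈ e := starCanon_self he'
  have heShape : e = {i} ∨ ∃ m, starAdj (2 * k) i m ∧ e = ({i, m} : Set (Fin (2 * k))) :=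
    starCanon_shape he'
  have hφe : ∀ j ∈ e, φ j = some (starCanon (2 * k) j) := by
    intro j hj
    obtain ⟨E, hE⟩ := Option.ne_none_iff_exists'.1 (hφcl i Ei hEi e he j hj)
    rw [hE, hcanon j E hE]
  have hσ : ∀ j ∈ e, ∀ f ∈ starCanon (2 * k) j, f ≠ e →
      σ j f ∈ (colorI (2 * k)).simplices ∧ Simplex.names (σ j f) = f ∧ σ j f j = ρ j :=
    fun j hj f hf hfe => hσ0 j hj (starCanon (2 * k) j) (hφe j hj) f hf hfe
  -- membership in names of ρ
  have hρe : ∀ j ∈ e, ∃ w, ρ j = some w := by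
    intro j hj
    have h1 : j ∈ Simplex.names ρ := by rw [hρn]; exact hj
    exact Option.ne_none_iff_exists'.1 h1
  have hρe' : ∀ j w, ρ j = some w → j ∈ e := by
    intro j w h
    rw [← hρn]
    simp [Simplex.names, h]
  have hσf : ∀ j ∈ e, ∀ f (hf : f ∈ starCanon (2 * k) j) (hfe : f ≠ e),
      ∀ m, m ∈ f ↔ ∃ w, σ j f m = some w := by
    intro j hj f hf hfe m
    conv_lhs => rw [← (hσ j hj f hf hfe).2.1]
    exact Option.ne_none_iff_exists'
  have hpair : ∀ a b, a ∈ e → b ∈ e → a ≠ b → e = {a, b} ∧ starAdj (2 * k) a b := by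
    intro a b ha hb hab
    rcases heShape with h | ⟨m, hm, h⟩
    · subst h
      exact absurd ((Set.mem_singleton_iff.1 ha).trans (Set.mem_singleton_iff.1 hb).symm) hab
    · subst h
      rcases Set.mem_insert_iff.1 ha with ha' | ha' <;>
        rcases Set.mem_insert_iff.1 hb with hb' | hb'
      · exact absurd (ha'.trans hb'.symm) hab
      · rw [Set.mem_singleton_iff] at hb'; rw [ha', hb']; exact ⟨rfl, hm⟩
      · rw [Set.mem_singleton_iff] at ha'; rw [ha', hb']
        exact ⟨Set.pair_comm i m, starAdj_symm hm⟩
      · rw [Set.mem_singleton_iff] at ha' hb'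
        exact absurd (ha'.trans hb'.symm) hab
  -- the canonical predicate
  set Q : Fin (2 * k) → Fin 3 → Prop := fun m w =>
    ρ m = some w ∨ ∃ j ∈ e, ∃ f ∈ starCanon (2 * k) j, f ≠ e ∧ σ j f m = some w with hQ
  have hQmk : ∀ j ∈ e, ∀ f ∈ starCanon (2 * k) j, f ≠ e → ∀ m w,
      σ j f m = some w → Q m w := by
    intro j hj f hf hfe m w h
    rw [hQ]
    exact Or.inr ⟨j, hj, f, hf, hfe, h⟩
  have hQe : ∀ j ∈ e, ∃ w, Q j w := by
    intro j hj
    obtain ⟨w, hw⟩ := hρe j hj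
    exact ⟨w, by rw [hQ]; exact Or.inl hw⟩
  -- mixed uniqueness
  have hmix : ∀ j ∈ e, ∀ f ∈ starCanon (2 * k) j, f ≠ e → ∀ m w w',
      ρ m = some w → σ j f m = some w' → w = w' := by
    intro j hj f hf hfe m w w' h1 h2
    have hme : m ∈ e := hρe' m w h1
    by_cases hmj : m = j
    · subst hmj
      have h3 := (hσ m hme f hf hfe).2.2
      rw [h2, h1] at h3
      exact (Option.some.inj h3).symm
    · obtain ⟨hfeq, _⟩ := starCanon_pair hf ((hσf j hj f hf hfe m).2 ⟨w', h2⟩) hmj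
      obtain ⟨heq, _⟩ := hpair j m hj hme (Ne.symm hmj)
      exact absurd (hfeq.trans heq.symm) hfe
  have hσσ : ∀ j1 ∈ e, ∀ j2 ∈ e, ∀ f1 ∈ starCanon (2 * k) j1, ∀ f2 ∈ starCanon (2 * k) j2,
      f1 ≠ e → f2 ≠ e → ∀ m w w', σ j1 f1 m = some w → σ j2 f2 m = some w' → w = w' := by
    intro j1 hj1 j2 hj2 f1 hf1 f2 hf2 hf1e hf2e m w w' h1 h2
    have hm1 : m ∈ f1 := (hσf j1 hj1 f1 hf1 hf1e m).2 ⟨w, h1⟩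
    have hm2 : m ∈ f2 := (hσf j2 hj2 f2 hf2 hf2e m).2 ⟨w', h2⟩
    by_cases hj : j1 = j2
    · subst hj
      by_cases hff : f1 = f2
      · subst hff
        rw [h1] at h2
        exact Option.some.inj h2
      · by_cases hmj : m = j1
        · subst hmj
          have e1 := (hσ m hj1 f1 hf1 hf1e).2.2
          have e2 := (hσ m hj1 f2 hf2 hf2e).2.2
          rw [h1] at e1; rw [h2] at e2
          exact Option.some.inj (e1.trans e2.symm)
        · obtain ⟨q1, _⟩ := starCanon_pair hf1 hm1 hmj
          obtain ⟨q2, _⟩ := starCanon_pair hf2 hm2 hmj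
          exact absurd (q1.trans q2.symm) hff
    · exfalso
      obtain ⟨heq, hadj⟩ := hpair j1 j2 hj1 hj2 hj
      by_cases hm1j : m = j1
      · subst hm1j
        obtain ⟨q2, _⟩ := starCanon_pair hf2 hm2 hj
        exact hf2e (q2.trans ((Set.pair_comm j2 m).trans heq.symm))
      · by_cases hm2j : m = j2
        · subst hm2j
          obtain ⟨q1, _⟩ := starCanon_pair hf1 hm1 (Ne.symm hj)
          exact hf1e (q1.trans heq.symm)
        · obtain ⟨_, a1⟩ := starCanon_pair hf1 hm1 hm1j
          obtain ⟨_, a2⟩ := starCanon_pair hf2 hm2 hm2j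
          exact starAdj_no_triangle hadj a1 a2
  have huniq : ∀ m w w', Q m w → Q m w' → w = w' := by
    intro m w w' h1 h2
    rw [hQ] at h1 h2
    rcases h1 with h1 | ⟨j1, hj1, f1, hf1, hf1e, h1⟩ <;>
      rcases h2 with h2 | ⟨j2, hj2, f2, hf2, hf2e, h2⟩
    · rw [h1] at h2; exact Option.some.inj h2
    · exact hmix j2 hj2 f2 hf2 hf2e m w w' h1 h2
    · exact (hmix j1 hj1 f1 hf1 hf1e m w' w h2 h1).symm
    · exact hσσ j1 hj1 j2 hj2 f1 hf1 f2 hf2 hf1e hf2e m w w' h1 h2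
  have hAchar : ∀ m w, Q m w → m ∈ e ∨ ∃ j ∈ e, starAdj (2 * k) j m := by
    intro m w h
    rw [hQ] at h
    rcases h with h | ⟨j, hj, f, hf, hfe, h⟩
    · exact Or.inl (hρe' m w h)
    · have hmf : m ∈ f := (hσf j hj f hf hfe m).2 ⟨w, h⟩
      by_cases hmj : m = j
      · subst hmj; exact Or.inl hj
      · exact Or.inr ⟨j, hj, (starCanon_pair hf hmf hmj).2⟩
  have hmk : ∀ a ∈ e, ∀ b, starAdj (2 * k) a b → b ∉ e →
      ({a, b} : Set (Fin (2 * k))) ∈ starCanon (2 * k) a ∧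
        ({a, b} : Set (Fin (2 * k))) ≠ e := by
    intro a ha b hab hb
    refine ⟨Or.inr ⟨b, hab, rfl⟩, fun h => hb ?_⟩
    rw [← h]; exact Set.mem_insert_of_mem _ rfl
  have hcolor : ∀ ω ∈ (colorI (2 * k)).simplices, ∀ a b wa wb, starAdj (2 * k) a b →
      ω a = some wa → ω b = some wb → wa ≠ wb := by
    intro ω hω a b wa wb hab ha hb
    obtain ⟨-, τ, ⟨u, hu, hτ⟩, hle⟩ := hω
    have ha' := hle a wa ha
    have hb' := hle b wb hb
    rw [hτ] at ha' hb'
    have e1 : u a = wa := Option.some.inj ha'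
    have e2 : u b = wb := Option.some.inj hb'
    rw [← e1, ← e2]
    exact hu a b hab
  have hedge : ∀ a b wa wb, starAdj (2 * k) a b → Q a wa → Q b wb → wa ≠ wb := by
    intro a b wa wb hab hqa hqb
    suffices hcs : ∃ ω ∈ (colorI (2 * k)).simplices,
        (∃ x, ω a = some x) ∧ (∃ y, ω b = some y) ∧ ∀ m' w', ω m' = some w' → Q m' w' by
      obtain ⟨ω, hω, ⟨x, hx⟩, ⟨y, hy⟩, hcl⟩ := hcs
      have hxa : x = wa := huniq a x wa (hcl a x hx) hqa
      have hyb : y = wb := huniq b y wb (hcl b y hy) hqb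
      rw [← hxa, ← hyb]
      exact hcolor ω hω a b x y hab hx hy
    by_cases hae : a ∈ e <;> by_cases hbe : b ∈ e
    · refine ⟨ρ, hρ, hρe a hae, hρe b hbe, fun m' w' h => ?_⟩
      rw [hQ]; exact Or.inl h
    · obtain ⟨hf, hfe⟩ := hmk a hae b hab hbe
      refine ⟨σ a {a, b}, (hσ a hae _ hf hfe).1, ?_, ?_, hQmk a hae _ hf hfe⟩
      · exact (hσf a hae _ hf hfe a).1 (Set.mem_insert _ _)
      · exact (hσf a hae _ hf hfe b).1 (Set.mem_insert_of_mem _ rfl)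
    · obtain ⟨hf, hfe⟩ := hmk b hbe a (starAdj_symm hab) hae
      refine ⟨σ b {b, a}, (hσ b hbe _ hf hfe).1, ?_, ?_, hQmk b hbe _ hf hfe⟩
      · exact (hσf b hbe _ hf hfe a).1 (Set.mem_insert_of_mem _ rfl)
      · exact (hσf b hbe _ hf hfe b).1 (Set.mem_insert _ _)
    · exfalso
      rcases hAchar a wa hqa with h | ⟨j1, hj1, hja⟩
      · exact hae h
      rcases hAchar b wb hqb with h | ⟨j2, hj2, hjb⟩
      · exact hbe h
      have hj1b : j1 ≠ b := fun h => hbe (h ▸ hj1)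
      have hj2a : j2 ≠ a := fun h => hae (h ▸ hj2)
      have ha2 : a.val < 2 := starAdj_two_nbrs (starAdj_symm hja) hab hj1b
      have hb2 : b.val < 2 := starAdj_two_nbrs (starAdj_symm hjb) (starAdj_symm hab) hj2a
      have hab' : a.val ≠ b.val := fun h => starAdj_ne hab (Fin.ext h)
      rcases heShape with h | ⟨m, hm, h⟩
      · have e1 : j1 = i := by rw [h] at hj1; exact Set.mem_singleton_iff.1 hj1
        have e2 : j2 = i := by rw [h] at hj2; exact Set.mem_singleton_iff.1 hj2
        subst e1; subst e2
        exact starAdj_no_triangle hja hjb hab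
      · rcases starAdj_low hm with hlow | hlow
        · have hiv : i.val = a.val ∨ i.val = b.val := by omega
          rcases hiv with hh | hh
          · exact hae (Fin.ext hh ▸ hie)
          · exact hbe (Fin.ext hh ▸ hie)
        · have hme : m ∈ e := by rw [h]; exact Set.mem_insert_of_mem _ rfl
          have hmv : m.val = a.val ∨ m.val = b.val := by omega
          rcases hmv with hh | hh
          · exact hae (Fin.ext hh ▸ hme)
          · exact hbe (Fin.ext hh ▸ hme)
  have hD : ∀ m c, 2 ≤ m.val → starAdj (2 * k) m c → (∃ w, Q m w) → ∃ w, Q c w := by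
    intro m c hm2 hmc h
    obtain ⟨w, hw⟩ := h
    rcases hAchar m w hw with hme | ⟨j, hj, hjm⟩
    · by_cases hce : c ∈ e
      · exact hQe c hce
      · obtain ⟨hf, hfe⟩ := hmk m hme c hmc hce
        obtain ⟨w', hw'⟩ := (hσf m hme _ hf hfe c).1 (Set.mem_insert_of_mem _ rfl)
        exact ⟨w', hQmk m hme _ hf hfe c w' hw'⟩
    · have hjc : j = c := starAdj_unique hm2 (starAdj_symm hjm) hmc
      exact hQe c (hjc ▸ hj)
  -- the global coloring
  obtain ⟨v, hprop, hvQ⟩ := exists_star_coloring (by omega) Q huniq hedge hD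
  set υ : Simplex (2 * k) (Fin 3) := fun m =>
    if h : ∃ w, Q m w then some (v m) else none with hυdef
  have hυ : ∀ m, υ m = if h : ∃ w, Q m w then some (v m) else none := fun m => by
    rw [hυdef]
  have hle : Simplex.le υ (fun m => some (v m)) := by
    intro m x hx
    rw [hυ m] at hx
    by_cases h : ∃ w, Q m w
    · rw [dif_pos h] at hx
      exact hx
    · rw [dif_neg h] at hx
      exact absurd hx (by simp)
  refine ⟨υ, ?_, ?_⟩
  · show υ ∈ (colorI (2 * k)).simplices
    refine ⟨⟨i, ?_⟩, fun m => some (v m), ⟨v, hprop, rfl⟩, hle⟩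
    rw [hυ i, dif_pos (hQe i hie)]
    simp
  · intro m w
    constructor
    · intro hx
      rw [hυ m] at hx
      by_cases h : ∃ w', Q m w'
      · rw [dif_pos h] at hx
        have hw : v m = w := Option.some.inj hx
        have hq0 : Q m h.choose := h.choose_spec
        have hvc : v m = h.choose := hvQ m h.choose hq0
        have hqw : Q m w := by
          have : h.choose = w := hvc.symm.trans hw
          exact this ▸ hq0
        rw [hQ] at hqw
        rcases hqw with hh | ⟨j, hj, f, hf, hfe, hh⟩
        · exact Or.inl hh
        · exact Or.inr ⟨j, hj, starCanon (2 * k) j, hφe j hj, f, hf, hfe, hh⟩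
      · rw [dif_neg h] at hx
        exact absurd hx (by simp)
    · intro hr
      have hq : Q m w := by
        rw [hQ]
        rcases hr with hh | ⟨j, hj, Ej, hEj, f, hf, hfe, hh⟩
        · exact Or.inl hh
        · exact Or.inr ⟨j, hj, f, by rwa [← hcanon j Ej hEj], hfe, hh⟩
      rw [hυ m, dif_pos ⟨w, hq⟩, hvQ m w hq]
      rfl

end Speedup
end
end

section
/- Let H be a hypergraph on vertex set [n] and let (I,O,Δ) be any task on n processes. Then the derived specification (I,O',Δ') = Φ*(I,O,Δ) defined by properties P0–P3 w.r.t. H-LOCAL(H) satisfies the edge-checkability condition in H-LOCAL(H): for every simplex σ ∈ I with name(σ) = I', every set τ = {(i,y_i) : i ∈ I'} with all y_i values of vertices of O', and every closed simplex {(i,E_i) : i ∈ I'} of H-LOCAL(H), τ ∈ Δ'(σ) if and only if π_e(τ) ∈ Δ'(π_e(σ)) for every i ∈ I' and every channel e ∈ E_i. -/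
open scoped Classical
noncomputable section

namespace Speedup

variable {n : ℕ}

/-- The forced channel set of process `i` in `H-LOCAL(H)`. -/
def EHset {n : ℕ} (H : Set (Set (Fin n))) (i : Fin n) : Chans n :=
  {e | (e ∈ H ∧ i ∈ e) ∨ e = {i}}

lemma mem_EHset_self {n : ℕ} (H : Set (Set (Fin n))) (i : Fin n) :
    ({i} : Set (Fin n)) ∈ EHset H i := Or.inr rfl

lemma mem_of_mem_EHset {n : ℕ} {H : Set (Set (Fin n))} {i : Fin n} {e : Set (Fin n)}
    (h : e ∈ EHset H i) : i ∈ e := by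
  rcases h with ⟨-, h⟩ | h
  · exact h
  · rw [h]; exact rfl

lemma hlocal_forced {n : ℕ} (H : Set (Set (Fin n))) {φ : Simplex n (Chans n)}
    (hφ : φ ∈ (hlocal H).simplices) {i : Fin n} {E : Chans n} (h : φ i = some E) :
    E = EHset H i := by
  obtain ⟨-, ψ, hψ, hle⟩ := hφ
  have h2 := hle i E h
  rw [Set.mem_singleton_iff] at hψ
  subst hψ
  exact (Option.some_injective _ h2).symm

/-- For every hypergraph `H` on `[n]` and every task `(I,O,Δ)` on `n`
processes, the derived specification `(I,O',Δ') = Φ*(I,O,Δ)` defined by P0–P3 w.r.t.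
`H-LOCAL(H)` satisfies the edge-checkability condition in `H-LOCAL(H)`. -/
theorem derived_edge_checkable {n : ℕ} {X Y : Type*} (H : Set (Set (Fin n)))
    (T : Task n X Y) (hT : T.WF) :
    EdgeCheckable (hlocal H) (phiTask (hlocal H) T) := by
  intro σ hσ τ hnames hvals φ hφ hφσ
  -- name chain
  have hφτ : ∀ k : Fin n, (φ k).isSome ↔ (τ k).isSome := fun k => (hφσ k).trans (hnames k)
  constructor
  · -- forward direction
    rintro ⟨hout, hfst⟩ i Ei hEi e he
    have hEiv := hlocal_forced H hφ.1 hEi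
    have hie : i ∈ e := by
      rw [hEiv] at he
      rcases he with ⟨-, h⟩ | h
      · exact h
      · rw [h]; exact rfl
    refine ⟨?_, ?_⟩
    · refine (phiOut (hlocal H) T).down τ hout _ ?_ ?_
      · intro k x hk
        simp only [proj] at hk
        split at hk
        · exact hk
        · exact absurd hk (by simp)
      · refine ⟨i, ?_⟩
        have h1 : (φ i).isSome := by rw [hEi]; rfl
        have h3 := (hφτ i).1 h1
        simp only [proj, if_pos hie]
        exact Option.ne_none_iff_isSome.2 h3
    · intro k
      simp only [proj]
      split
      · exact hfst k
      · rfl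
  · -- backward direction
    intro hyp
    classical
    -- a base facet w0
    obtain ⟨i0, hi0⟩ := T.inp.nonempty_mem σ hσ
    have hτi0 : (τ i0).isSome := (hnames i0).1 (Option.ne_none_iff_isSome.1 hi0)
    obtain ⟨p0, hp0⟩ := Option.isSome_iff_exists.1 hτi0
    obtain ⟨j0, ς, hς, hςj⟩ := hvals i0 p0 hp0
    obtain ⟨-, μ, ⟨w0, hw0, hμ⟩, -⟩ := hς
    -- the forced channel set
    -- dichotomy: channels touching names φ lie inside names φ
    have hdic : ∀ (i : Fin n) (e : Set (Fin n)), e ∈ EHset H i →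
        (∃ j ∈ e, φ j ≠ none) → ∀ k ∈ e, φ k ≠ none := by
      intro i e he hj k hk
      rcases he with ⟨heH, -⟩ | h
      · obtain ⟨j, hje, hjφ⟩ := hj
        obtain ⟨Ej, hEj⟩ := Option.ne_none_iff_exists'.1 hjφ
        have hEjv := hlocal_forced H hφ.1 hEj
        exact hφ.2 j Ej hEj e (by rw [hEjv]; exact Or.inl ⟨heH, hje⟩) k hk
      · subst h
        obtain ⟨j, hje, hjφ⟩ := hj
        rw [Set.mem_singleton_iff] at hk hje
        subst hk; subst hje; exact hjφ
    -- matching facets per channel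
    set P : Set (Fin n) → (Fin n → DerivedVal n X Y) → Prop :=
      fun e w => PhiFacet (hlocal H) T w ∧ ∀ k ∈ e, some (w k) = τ k with hP
    set W : Set (Fin n) → (Fin n → DerivedVal n X Y) :=
      fun e => if h : ∃ w, P e w then h.choose else w0 with hW
    have hWpos : ∀ e, (h : ∃ w, P e w) → P e (W e) := by
      intro e h
      rw [hW]
      simp only [dif_pos h]
      exact h.choose_spec
    have hWneg : ∀ e, ¬(∃ w, P e w) → W e = w0 := by
      intro e h
      rw [hW]; simp only [dif_neg h]
    have hWfacet : ∀ e, PhiFacet (hlocal H) T (W e) := by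
      intro e
      by_cases h : ∃ w, P e w
      · exact (hWpos e h).1
      · rw [hWneg e h]; exact hw0
    -- the hypothesis yields a matching facet for relevant channels
    have hrel : ∀ i Ei, φ i = some Ei → ∀ e ∈ Ei, ∀ k ∈ e, some (W e k) = τ k := by
      intro i Ei hEi e he k hk
      have hEiv := hlocal_forced H hφ.1 hEi
      obtain ⟨⟨-, μ', ⟨w, hwf, hμ'⟩, hle⟩, -⟩ := hyp i Ei hEi e he
      have hkφ : φ k ≠ none := by
        refine hdic i e (hEiv ▸ he) ⟨i, ?_, ?_⟩ k hk
        · exact mem_of_mem_EHset (hEiv ▸ he)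
        · rw [hEi]; exact Option.some_ne_none _
      have hkτ : (τ k).isSome := (hφτ k).1 (Option.ne_none_iff_isSome.1 hkφ)
      obtain ⟨x, hx⟩ := Option.isSome_iff_exists.1 hkτ
      have hex : ∃ w', P e w' := by
        refine ⟨w, hwf, ?_⟩
        intro k' hk'
        have hk'φ : φ k' ≠ none := by
          refine hdic i e (hEiv ▸ he) ⟨i, ?_, ?_⟩ k' hk'
          · exact mem_of_mem_EHset (hEiv ▸ he)
          · rw [hEi]; exact Option.some_ne_none _
        have hk'τ : (τ k').isSome := (hφτ k').1 (Option.ne_none_iff_isSome.1 hk'φ)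
        obtain ⟨x', hx'⟩ := Option.isSome_iff_exists.1 hk'τ
        have hproj' : proj e τ k' = some x' := by simp only [proj, if_pos hk']; exact hx'
        have h2 : some (w k') = some x' := by
          have h3 := hle k' x' hproj'
          rw [hμ'] at h3
          exact h3
        rw [hx']
        exact h2
      exact (hWpos e hex).2 k hk
    -- the glued facet
    set v : Fin n → DerivedVal n X Y := fun k => (τ k).getD (w0 k) with hv
    have hvI : ∀ k x, τ k = some x → v k = x := by
      intro k x h; rw [hv]; simp [h]
    have hvO : ∀ k, τ k = none → v k = w0 k := by
      intro k h; rw [hv]; simp [h]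
    -- φ-value at named k
    have hφval : ∀ k : Fin n, τ k ≠ none → φ k = some (EHset H k) := by
      intro k h
      have : (φ k).isSome := (hφτ k).2 (Option.ne_none_iff_isSome.1 h)
      obtain ⟨E, hE⟩ := Option.isSome_iff_exists.1 this
      rw [hE, hlocal_forced H hφ.1 hE]
    -- v matches W e on each channel e of a closed simplex
    have hmatch : ∀ (i : Fin n) (e : Set (Fin n)), e ∈ EHset H i →
        ∀ k ∈ e, v k = W e k := by
      intro i e he k hk
      by_cases hj : ∃ j ∈ e, φ j ≠ none
      · have hall := hdic i e he hj
        have hie : i ∈ e := mem_of_mem_EHset he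
        have hiφ : φ i ≠ none := hall i hie
        have hτi : τ i ≠ none :=
          Option.ne_none_iff_isSome.2 ((hφτ i).1 (Option.ne_none_iff_isSome.1 hiφ))
        have hφi := hφval i hτi
        have := hrel i (EHset H i) hφi e he k hk
        have hτk : τ k = some (W e k) := this.symm
        exact hvI k _ hτk
      · push_neg at hj
        have hτnone : ∀ k' ∈ e, τ k' = none := by
          intro k' hk'
          have hφk : φ k' = none := hj k' hk'
          refine Option.not_isSome_iff_eq_none.1 fun h => ?_
          have h2 := (hφτ k').2 h
          rw [hφk] at h2
          exact absurd h2 (by simp)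
        have hτk : τ k = none := hτnone k hk
        have hWe : W e = w0 := by
          refine hWneg e ?_
          rintro ⟨w, -, hwτ⟩
          have hie : i ∈ e := mem_of_mem_EHset he
          have h1 := hwτ i hie
          rw [hτnone i hie] at h1
          exact Option.some_ne_none _ h1
        rw [hWe]
        exact hvO k hτk
    -- v is a facet: PhiFacet
    have hvfacet : PhiFacet (hlocal H) T v := by
      refine ⟨?_, ?_, ?_⟩
      · -- PhiVertex
        intro k
        rcases h : τ k with _ | x
        · rw [hvO k h]; exact hw0.1 k
        · have hτk : τ k ≠ none := by rw [h]; exact Option.some_ne_none _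
          have hφk := hφval k hτk
          have := hrel k (EHset H k) hφk {k} (mem_EHset_self H k) k rfl
          have hWk : W {k} k = v k := by
            rw [hvI k x h]
            rw [h] at this
            exact Option.some_injective _ this
          rw [← hWk]
          exact (hWfacet {k}).1 k
      · -- P1
        refine ⟨fun e => ((hWfacet e).2.1).choose e, ?_⟩
        intro φ' hφ' i Ei hEi e he
        have hEiv := hlocal_forced H hφ'.1 hEi
        have heEH : e ∈ EHset H i := hEiv ▸ he
        obtain ⟨c1, c2⟩ := ((hWfacet e).2.1).choose_spec φ' hφ' i Ei hEi e he
        constructor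
        · intro k hk Ek hEk
          rw [hmatch i e heEH k hk]
          exact c1 k hk Ek hEk
        · intro y hy
          obtain ⟨τ', hτ', hτ'x, ρ, hρ, hρy⟩ := c2 y hy
          refine ⟨τ', hτ', ?_, ρ, hρ, hρy⟩
          intro k hk
          rw [hmatch i e heEH k hk]
          exact hτ'x k hk
      · -- P2
        intro φ' hφ'
        constructor
        · intro i Ei hEi
          rcases h : τ i with _ | x
          · rw [hvO i h]
            exact ((hw0.2.2 φ' hφ').1 i Ei hEi)
          · have hτi : τ i ≠ none := by rw [h]; exact Option.some_ne_none _
            have hφi := hφval i hτi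
            have hrr := hrel i (EHset H i) hφi {i} (mem_EHset_self H i) i rfl
            have hWi : W {i} i = v i := by
              rw [hvI i x h]
              rw [h] at hrr
              exact Option.some_injective _ hrr
            rw [← hWi]
            exact ((hWfacet {i}).2.2 φ' hφ').1 i Ei hEi
        · intro i Ei j Ej hEi hEj e he hie hf
          rcases h : τ i with _ | x
          · rw [hvO i h]
            exact ((hw0.2.2 φ' hφ').2 i Ei j Ej hEi hEj e he hie hf)
          · have hτi : τ i ≠ none := by rw [h]; exact Option.some_ne_none _
            have hφi := hφval i hτi
            have hrr := hrel i (EHset H i) hφi {i} (mem_EHset_self H i) i rfl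
            have hWi : W {i} i = v i := by
              rw [hvI i x h]
              rw [h] at hrr
              exact Option.some_injective _ hrr
            rw [← hWi]
            exact ((hWfacet {i}).2.2 φ' hφ').2 i Ei j Ej hEi hEj e he hie hf
    refine ⟨?_, ?_⟩
    · -- τ ∈ phiOut
      refine ⟨⟨i0, by rw [hp0]; exact Option.some_ne_none _⟩,
        (fun i => some (v i)), ⟨v, hvfacet, rfl⟩, ?_⟩
      intro k x h
      show some (v k) = some x
      rw [hvI k x h]
    · -- ∀ i, (τ i).map Prod.fst = σ i
      intro i
      rcases h : τ i with _ | p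
      · have : (σ i) = none := by
          by_contra hh
          have : (τ i).isSome := (hnames i).1 (Option.ne_none_iff_isSome.1 hh)
          rw [h] at this
          exact absurd this (by simp)
        rw [this]; rfl
      · have hτi : τ i ≠ none := by rw [h]; exact Option.some_ne_none _
        have hφi := hφval i hτi
        have := (hyp i (EHset H i) hφi {i} (mem_EHset_self H i)).2 i
        simp only [proj, if_pos (Set.mem_singleton i)] at this
        rw [h] at this
        exact this

end Speedup
end
end

section
/- Let G be a graph on vertex set [n], let X be a finite nonempty value set, and let C be a finite color set. Consider the proper-coloring task (I,O,Δ) where I is the chromatic complex of all sets {(i,x_i) : i ∈ I'} with x_i ∈ X, O is the chromatic complex of all sets {(i,c_i) : i ∈ I'} with c_i ∈ C and c_i ≠ c_j for every edge {i,j} of G with i,j ∈ I', and Δ(σ) is the set of all simplices τ ∈ O with name(τ) = name(σ). Then this task is locally checkable in WF-LOCAL(G). -/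
open scoped Classical
noncomputable section

namespace Speedup

variable {n : ℕ}

/-- The (complete) input complex on value set `X`. -/
def fullInp (n : ℕ) (X : Type*) : Complex n X where
  simplices := {σ | Simplex.NonemptyS σ}
  nonempty_mem := fun _ h => h
  down := fun _ _ _ _ h => h

/-- The output complex of proper coloring: all partial assignments of colors that are
proper on every edge of the graph. -/
def colorOut (n : ℕ) (C : Type*) (adj : Fin n → Fin n → Prop) : Complex n C where
  simplices := {σ | Simplex.NonemptyS σ ∧
    ∀ i j ci cj, σ i = some ci → σ j = some cj → adj i j → ci ≠ cj}
  nonempty_mem := fun _ h => h.1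
  down := fun σ hσ σ' hle hne =>
    ⟨hne, fun i j ci cj hi hj ha => hσ.2 i j ci cj (hle i ci hi) (hle j cj hj) ha⟩

/-- The proper-coloring task: any proper partial coloring on the same names is allowed. -/
def colorTask (n : ℕ) (X C : Type*) (adj : Fin n → Fin n → Prop) : Task n X C :=
  ⟨fullInp n X, colorOut n C adj,
    fun σ => {τ | τ ∈ (colorOut n C adj).simplices ∧ sameNames σ τ}⟩

lemma proj_eq_some {X : Type*} {J : Set (Fin n)} {τ : Simplex n X} {a : Fin n} {c : X}
    (h : proj J τ a = some c) : τ a = some c := by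
  unfold proj at h; split at h <;> simp_all

lemma proj_of_mem {X : Type*} {J : Set (Fin n)} (τ : Simplex n X) {a : Fin n}
    (h : a ∈ J) : proj J τ a = τ a := by
  simp [proj, h]

/-- The proper-coloring task on a graph `G` over `[n]` is locally
checkable in `WF-LOCAL(G)`. -/
theorem coloring_locally_checkable_wfLocal {n : ℕ} (X C : Type*)
    [Finite X] [Nonempty X] [Finite C]
    (adj : Fin n → Fin n → Prop) (hsym : ∀ i j, adj i j → adj j i)
    (hirr : ∀ i, ¬ adj i i) :
    LocallyCheckable (wfLocal adj) (colorTask n X C adj) := by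
  intro σ hσ τ hnames hvals φ hφ hφσ
  obtain ⟨hφne, σS, ⟨I, E, hIne, hE, hclq, rfl⟩, hle⟩ := hφ.1
  have hstruct : ∀ i Ei, φ i = some Ei →
      i ∈ I ∧ Ei = {e | e = {i} ∨ ∃ j ∈ E i, j ≠ i ∧ e = ({i, j} : Set (Fin n))} := by
    intro i Ei hi
    have h2 := hle i Ei hi
    by_cases hiI : i ∈ I
    · simp only [hiI, if_true, Option.some.injEq] at h2
      exact ⟨hiI, h2.symm⟩
    · simp [hiI] at h2
  have hτname : ∀ i, (φ i).isSome ↔ (τ i).isSome := by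
    intro i; exact (hφσ i).trans (hnames i)
  constructor
  · rintro ⟨⟨-, hprop⟩, -⟩ i Ei hEi
    obtain ⟨hiI, hEival⟩ := hstruct i Ei hEi
    have hiJ : i ∈ ⋃₀ Ei := by
      refine Set.mem_sUnion.2 ⟨{i}, ?_, rfl⟩
      rw [hEival]; exact Or.inl rfl
    have hτi : (τ i).isSome := (hτname i).1 (by rw [hEi]; rfl)
    obtain ⟨ci, hci⟩ := Option.isSome_iff_exists.1 hτi
    refine ⟨⟨⟨i, ?_⟩, ?_⟩, ?_⟩
    · rw [proj_of_mem τ hiJ, hci]; simp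
    · intro a b ca cb ha hb hadj
      exact hprop a b ca cb (proj_eq_some ha) (proj_eq_some hb) hadj
    · intro k
      by_cases hk : k ∈ ⋃₀ Ei
      · rw [proj_of_mem σ hk, proj_of_mem τ hk]; exact hnames k
      · simp [proj, hk]
  · intro h
    refine ⟨⟨?_, ?_⟩, hnames⟩
    · obtain ⟨i, hi⟩ := hσ
      refine ⟨i, ?_⟩
      have : (σ i).isSome := Option.ne_none_iff_isSome.1 hi
      exact Option.ne_none_iff_isSome.2 ((hnames i).1 this)
    · intro i j ci cj hi hj hadj
      have hij : i ≠ j := by rintro rfl; exact hirr i hadj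
      have hφi : (φ i).isSome := (hτname i).2 (by rw [hi]; rfl)
      have hφj : (φ j).isSome := (hτname j).2 (by rw [hj]; rfl)
      obtain ⟨Ei, hEi⟩ := Option.isSome_iff_exists.1 hφi
      obtain ⟨Ej, hEj⟩ := Option.isSome_iff_exists.1 hφj
      obtain ⟨hiI, hEival⟩ := hstruct i Ei hEi
      obtain ⟨hjI, hEjval⟩ := hstruct j Ej hEj
      have hUsub : ({i, j} : Set (Fin n)) ⊆ I := by
        intro x hx; rcases hx with rfl | rfl
        · exact hiI
        · exact hjI
      have hUcl : ∀ a ∈ ({i, j} : Set (Fin n)), ∀ b ∈ ({i, j} : Set (Fin n)),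
          a ≠ b → adj a b := by
        rintro a (rfl | rfl) b (rfl | rfl) hab
        · exact absurd rfl hab
        · exact hadj
        · exact hsym _ _ hadj
        · exact absurd rfl hab
      have hkey := (hclq {i, j} hUsub hUcl i (Or.inl rfl) j (Or.inr rfl)).1
      have hiEi : i ∈ E i := (hE i hiI).1
      have hjEj : j ∈ E j := (hE j hjI).1
      rcases hkey with hk | hk
      · -- E i ∩ U ⊆ E j ∩ U, so i ∈ E j; use channel {j,i} of j
        have hiEj : i ∈ E j := (hk ⟨hiEi, Or.inl rfl⟩).1
        have hch : ({j, i} : Set (Fin n)) ∈ Ej := by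
          rw [hEjval]; exact Or.inr ⟨i, hiEj, hij, rfl⟩
        have hiJ : i ∈ ⋃₀ Ej := Set.mem_sUnion.2 ⟨{j, i}, hch, Or.inr rfl⟩
        have hjJ : j ∈ ⋃₀ Ej := Set.mem_sUnion.2 ⟨{j, i}, hch, Or.inl rfl⟩
        have hp := (h j Ej hEj).1.2
        exact hp i j ci cj (by rw [proj_of_mem τ hiJ]; exact hi)
          (by rw [proj_of_mem τ hjJ]; exact hj) hadj
      · -- E j ∩ U ⊆ E i ∩ U, so j ∈ E i; use channel {i,j} of i
        have hjEi : j ∈ E i := (hk ⟨hjEj, Or.inr rfl⟩).1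
        have hch : ({i, j} : Set (Fin n)) ∈ Ei := by
          rw [hEival]; exact Or.inr ⟨j, hjEi, hij.symm, rfl⟩
        have hiJ : i ∈ ⋃₀ Ei := Set.mem_sUnion.2 ⟨{i, j}, hch, Or.inl rfl⟩
        have hjJ : j ∈ ⋃₀ Ei := Set.mem_sUnion.2 ⟨{i, j}, hch, Or.inr rfl⟩
        have hp := (h i Ei hEi).1.2
        exact hp i j ci cj (by rw [proj_of_mem τ hiJ]; exact hi)
          (by rw [proj_of_mem τ hjJ]; exact hj) hadj

end Speedup
end
end
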